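/- arXiv:2105.13342 — 5 statements merged into one kernel-verified Lean document; each statement's English description precedes it below -/
import Mathlib

section
/- Let x = (x₁,…,x_m) be real numbers, g₁, g₂ twice continuously differentiable on the smallest closed interval J(x) containing all x_j, with g₂''(t) ≠ 0 on J(x) and g₂ such that the denominator g₂(x̄) − (1/m) Σ g₂(x_j) is nonzero, where x̄ = (1/m) Σ x_j. Then there exists ξ ∈ J(x) with [g₁(x̄) − (1/m) Σ_{j=1}^m g₁(x_j)] / [g₂(x̄) − (1/m) Σ_{j=1}^m g₂(x_j)] = g₁''(ξ)/g₂''(ξ). -/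
open Finset

/-- If `f` has second derivative `f''` positive on `[a,b]`, it is strictly convex there. -/
lemma mercer_aux_strictConvexOn (a b : ℝ) (f f' f'' : ℝ → ℝ)
    (h : ∀ t ∈ Set.Icc a b, HasDerivAt f (f' t) t)
    (h' : ∀ t ∈ Set.Icc a b, HasDerivAt f' (f'' t) t)
    (hpos : ∀ t ∈ Set.Icc a b, 0 < f'' t) :
    StrictConvexOn ℝ (Set.Icc a b) f := by
  apply strictConvexOn_of_deriv2_pos (convex_Icc a b)
    (fun t ht => (h t ht).continuousAt.continuousWithinAt)
  intro t ht
  rw [interior_Icc] at ht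
  have ht' : t ∈ Set.Icc a b := Set.Ioo_subset_Icc_self ht
  have heq : Set.EqOn (deriv f) f' (Set.Icc a b) := fun s hs => (h s hs).deriv
  have hev : deriv f =ᶠ[nhds t] f' := heq.eventuallyEq_of_mem (Icc_mem_nhds ht.1 ht.2)
  have : deriv (deriv f) t = f'' t := by
    rw [hev.deriv_eq, (h' t ht').deriv]
  simpa [this] using hpos t ht'

/-- Mercer's mean-value theorem for Jensen gaps: for points `x₁,…,x_m` with mean `x̄`
in the smallest closed interval `[a,b]` containing them, and twice continuously
differentiable `g₁, g₂` with `g₂''` nonvanishing and nonzero Jensen gap for `g₂`,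
there is `ξ ∈ [a,b]` with the ratio of Jensen gaps equal to `g₁''(ξ)/g₂''(ξ)`. -/
theorem mercer_jensen_gap_ratio (m : ℕ) (x : Fin (m+1) → ℝ) (a b : ℝ)
    (ha : IsLeast (Set.range x) a) (hb : IsGreatest (Set.range x) b)
    (g₁ g₂ g₁' g₂' g₁'' g₂'' : ℝ → ℝ)
    (h₁ : ∀ t ∈ Set.Icc a b, HasDerivAt g₁ (g₁' t) t)
    (h₁' : ∀ t ∈ Set.Icc a b, HasDerivAt g₁' (g₁'' t) t)
    (h₁c : ContinuousOn g₁'' (Set.Icc a b))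
    (h₂ : ∀ t ∈ Set.Icc a b, HasDerivAt g₂ (g₂' t) t)
    (h₂' : ∀ t ∈ Set.Icc a b, HasDerivAt g₂' (g₂'' t) t)
    (h₂c : ContinuousOn g₂'' (Set.Icc a b))
    (hg₂'' : ∀ t ∈ Set.Icc a b, g₂'' t ≠ 0)
    (hden : g₂ ((1/(m+1:ℝ)) * ∑ j, x j) - (1/(m+1:ℝ)) * ∑ j, g₂ (x j) ≠ 0) :
    ∃ ξ ∈ Set.Icc a b,
      (g₁ ((1/(m+1:ℝ)) * ∑ j, x j) - (1/(m+1:ℝ)) * ∑ j, g₁ (x j)) /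
        (g₂ ((1/(m+1:ℝ)) * ∑ j, x j) - (1/(m+1:ℝ)) * ∑ j, g₂ (x j)) =
        g₁'' ξ / g₂'' ξ := by
  set w : ℝ := 1/(m+1:ℝ) with hw_def
  have hm : (0:ℝ) < m + 1 := by positivity
  have hw : 0 < w := by positivity
  have hmem : ∀ j, x j ∈ Set.Icc a b := fun j => ⟨ha.2 ⟨j, rfl⟩, hb.2 ⟨j, rfl⟩⟩
  set xbar : ℝ := w * ∑ j, x j with hxbar_def
  -- the mean lies in [a,b]
  have hsum_lo : (m+1:ℝ) * a ≤ ∑ j, x j := by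
    calc (m+1:ℝ) * a = ∑ _j : Fin (m+1), a := by simp [Finset.card_univ, mul_comm]
    _ ≤ ∑ j, x j := Finset.sum_le_sum fun j _ => (hmem j).1
  have hsum_hi : (∑ j, x j) ≤ (m+1:ℝ) * b := by
    calc (∑ j, x j) ≤ ∑ _j : Fin (m+1), b := Finset.sum_le_sum fun j _ => (hmem j).2
    _ = (m+1:ℝ) * b := by simp [Finset.card_univ, mul_comm]
  have hxbar : xbar ∈ Set.Icc a b := by
    constructor
    · have := mul_le_mul_of_nonneg_left hsum_lo hw.le
      rw [hxbar_def]
      calc a = w * ((m+1:ℝ) * a) := by rw [hw_def]; field_simp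
      _ ≤ w * ∑ j, x j := this
    · have := mul_le_mul_of_nonneg_left hsum_hi hw.le
      rw [hxbar_def]
      calc w * ∑ j, x j ≤ w * ((m+1:ℝ) * b) := this
      _ = b := by rw [hw_def]; field_simp
  -- the x j are not all equal
  have hp : ∃ j, ∃ k, x j ≠ x k := by
    by_contra hcon
    push_neg at hcon
    have hxc : ∀ j, x j = x 0 := fun j => hcon j 0
    have hsx : ∑ j, x j = (m+1:ℝ) * x 0 := by
      rw [Finset.sum_congr rfl (fun j _ => hxc j), Finset.sum_const, Finset.card_univ,
        Fintype.card_fin, nsmul_eq_mul]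
      push_cast; ring
    have hxb0 : xbar = x 0 := by rw [hxbar_def, hsx, hw_def]; field_simp
    have hsg : ∑ j, g₂ (x j) = (m+1:ℝ) * g₂ (x 0) := by
      rw [Finset.sum_congr rfl (fun j _ => congrArg g₂ (hxc j)), Finset.sum_const,
        Finset.card_univ, Fintype.card_fin, nsmul_eq_mul]
      push_cast; ring
    apply hden
    rw [hxb0, hsg, hw_def]
    field_simp
    ring
  have hab : a < b := by
    rcases lt_or_eq_of_le (ha.2 hb.1) with h | h
    · exact h
    · exfalso
      obtain ⟨j, k, hjk⟩ := hp
      have hj : x j = a := le_antisymm (by rw [h]; exact (hmem j).2) (hmem j).1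
      have hk : x k = a := le_antisymm (by rw [h]; exact (hmem k).2) (hmem k).1
      exact hjk (by rw [hj, hk])
  set D₁ : ℝ := g₁ xbar - w * ∑ j, g₁ (x j) with hD₁
  set D₂ : ℝ := g₂ xbar - w * ∑ j, g₂ (x j) with hD₂
  have hD₂ne : D₂ ≠ 0 := hden
  set L : ℝ := D₁ / D₂ with hL
  set F : ℝ → ℝ := fun t => g₁ t - L * g₂ t with hF
  set F' : ℝ → ℝ := fun t => g₁' t - L * g₂' t with hF'
  set F'' : ℝ → ℝ := fun t => g₁'' t - L * g₂'' t with hF''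
  have hFd : ∀ t ∈ Set.Icc a b, HasDerivAt F (F' t) t :=
    fun t ht => ((h₁ t ht).sub ((h₂ t ht).const_mul L))
  have hFd' : ∀ t ∈ Set.Icc a b, HasDerivAt F' (F'' t) t :=
    fun t ht => ((h₁' t ht).sub ((h₂' t ht).const_mul L))
  have hFc : ContinuousOn F'' (Set.Icc a b) := h₁c.sub (continuousOn_const.mul h₂c)
  -- the Jensen gap of F vanishes
  have hgap : F xbar = w * ∑ j, F (x j) := by
    have hs : ∑ j, F (x j) = (∑ j, g₁ (x j)) - L * ∑ j, g₂ (x j) := by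
      rw [hF]
      rw [Finset.sum_sub_distrib, Finset.mul_sum]
    have : F xbar - w * ∑ j, F (x j) = D₁ - L * D₂ := by
      rw [hs, hF, hD₁, hD₂, hL]; ring
    have h0 : D₁ - L * D₂ = 0 := by
      rw [hL, div_mul_cancel₀ _ hD₂ne]; ring
    linarith [this, h0]
  -- there is a point where F'' vanishes
  have hzero : ∃ ξ ∈ Set.Icc a b, F'' ξ = 0 := by
    by_contra hcon
    push_neg at hcon
    have hamem : a ∈ Set.Icc a b := ⟨le_refl a, hab.le⟩
    have hwsum : ∑ _j : Fin (m+1), w = 1 := by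
      rw [Finset.sum_const, Finset.card_univ, Fintype.card_fin, nsmul_eq_mul, hw_def]
      field_simp
      norm_num
    rcases (hcon a hamem).lt_or_gt with hneg | hpos
    · -- F'' < 0 everywhere, -F strictly convex, strict Jensen contradicts hgap
      have hall : ∀ t ∈ Set.Icc a b, F'' t < 0 := by
        intro t ht
        by_contra hle
        push_neg at hle
        have hlt : 0 < F'' t := lt_of_le_of_ne hle (Ne.symm (hcon t ht))
        have hsub : Set.Icc a t ⊆ Set.Icc a b := Set.Icc_subset_Icc le_rfl ht.2
        have := intermediate_value_Icc ht.1 (hFc.mono hsub)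
        have h0mem : (0:ℝ) ∈ Set.Icc (F'' a) (F'' t) := ⟨hneg.le, hlt.le⟩
        obtain ⟨ξ, hξ, hξ0⟩ := this h0mem
        exact hcon ξ (hsub hξ) hξ0
      have hconv : StrictConvexOn ℝ (Set.Icc a b) (fun t => -F t) :=
        mercer_aux_strictConvexOn a b _ (fun t => -F' t) (fun t => -F'' t)
          (fun t ht => (hFd t ht).neg) (fun t ht => (hFd' t ht).neg)
          (fun t ht => by simpa using hall t ht)
      obtain ⟨j, k, hjk⟩ := hp
      have := hconv.map_sum_lt (t := Finset.univ) (w := fun _ => w) (p := x)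
        (fun i _ => hw) hwsum (fun i _ => hmem i)
        ⟨j, Finset.mem_univ j, k, Finset.mem_univ k, hjk⟩
      simp only [smul_eq_mul, ← Finset.mul_sum] at this
      rw [← hxbar_def] at this
      have hsneg : ∑ i : Fin (m+1), -F (x i) = -∑ i, F (x i) := by
        rw [Finset.sum_neg_distrib]
      rw [hsneg, mul_neg] at this
      linarith [this, hgap]
    · have hall : ∀ t ∈ Set.Icc a b, 0 < F'' t := by
        intro t ht
        by_contra hle
        push_neg at hle
        have hlt : F'' t < 0 := lt_of_le_of_ne hle (hcon t ht)
        have hsub : Set.Icc a t ⊆ Set.Icc a b := Set.Icc_subset_Icc le_rfl ht.2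
        have := intermediate_value_Icc' ht.1 (hFc.mono hsub)
        have h0mem : (0:ℝ) ∈ Set.Icc (F'' t) (F'' a) := ⟨hlt.le, hpos.le⟩
        obtain ⟨ξ, hξ, hξ0⟩ := this h0mem
        exact hcon ξ (hsub hξ) hξ0
      have hconv : StrictConvexOn ℝ (Set.Icc a b) F :=
        mercer_aux_strictConvexOn a b F F' F'' hFd hFd' hall
      obtain ⟨j, k, hjk⟩ := hp
      have := hconv.map_sum_lt (t := Finset.univ) (w := fun _ => w) (p := x)
        (fun i _ => hw) hwsum (fun i _ => hmem i)
        ⟨j, Finset.mem_univ j, k, Finset.mem_univ k, hjk⟩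
      simp only [smul_eq_mul, ← Finset.mul_sum] at this
      rw [← hxbar_def] at this
      rw [hgap] at this
      exact lt_irrefl _ this
  obtain ⟨ξ, hξmem, hξ0⟩ := hzero
  refine ⟨ξ, hξmem, ?_⟩
  have hg2ne : g₂'' ξ ≠ 0 := hg₂'' ξ hξmem
  have h1 : g₁'' ξ = L * g₂'' ξ := by
    have h2 : g₁'' ξ - L * g₂'' ξ = 0 := hξ0
    linarith
  show D₁ / D₂ = g₁'' ξ / g₂'' ξ
  rw [h1, hL]
  field_simp
end

section
/- If M = [[A, X], [Xᵀ, B]] is a positive semidefinite block matrix, then ‖M‖ ≤ ‖A‖ + ‖B‖ (spectral norm) and ‖M‖_F ≤ ‖A‖_F + ‖B‖_F (Frobenius norm). -/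
open Matrix

/-- The Frobenius norm: `‖M‖_F = sqrt (tr (Mᵀ M))`. -/
noncomputable def frobNorm {n m : Type*} [Fintype n] [Fintype m]
    (M : Matrix n m ℝ) : ℝ :=
  Real.sqrt (Matrix.trace (Mᵀ * M))

/-- The spectral norm: the Euclidean (ℓ²) operator norm of the matrix. -/
noncomputable def specNorm {n : Type*} [Fintype n] [DecidableEq n]
    (M : Matrix n n ℝ) : ℝ :=
  ‖Matrix.toEuclideanCLM (𝕜 := ℝ) M‖

lemma trace_transpose_mul_eq {m n : Type*} [Fintype m] [Fintype n]
    (P Q : Matrix m n ℝ) :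
    Matrix.trace (Pᵀ * Q) = ∑ p : m × n, P p.1 p.2 * Q p.1 p.2 := by
  simp only [Matrix.trace, Matrix.mul_apply, Matrix.diag, Matrix.transpose_apply]
  rw [← Finset.sum_product', Finset.univ_product_univ]
  exact Fintype.sum_equiv (Equiv.prodComm _ _) _ _ (fun x => rfl)

lemma trace_transpose_mul_self_eq {m n : Type*} [Fintype m] [Fintype n]
    (M : Matrix m n ℝ) :
    Matrix.trace (Mᵀ * M) = ∑ p : m × n, (M p.1 p.2) ^ 2 := by
  rw [trace_transpose_mul_eq]; simp [sq]

lemma trace_transpose_mul_self_nonneg {m n : Type*} [Fintype m] [Fintype n]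
    (M : Matrix m n ℝ) : 0 ≤ Matrix.trace (Mᵀ * M) := by
  rw [trace_transpose_mul_self_eq]
  exact Finset.sum_nonneg fun _ _ => sq_nonneg _

lemma frobNorm_sq {m n : Type*} [Fintype m] [Fintype n] (M : Matrix m n ℝ) :
    frobNorm M ^ 2 = Matrix.trace (Mᵀ * M) :=
  Real.sq_sqrt (trace_transpose_mul_self_nonneg M)

lemma frobNorm_nonneg {m n : Type*} [Fintype m] [Fintype n] (M : Matrix m n ℝ) :
    0 ≤ frobNorm M := Real.sqrt_nonneg _

/-- Cauchy–Schwarz for the Frobenius inner product `tr (Pᵀ Q)`. -/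
lemma frob_inner_le {m n : Type*} [Fintype m] [Fintype n] (P Q : Matrix m n ℝ) :
    Matrix.trace (Pᵀ * Q) ≤ frobNorm P * frobNorm Q := by
  have cs := Finset.sum_mul_sq_le_sq_mul_sq Finset.univ
    (fun p : m × n => P p.1 p.2) (fun p : m × n => Q p.1 p.2)
  rw [trace_transpose_mul_eq]
  calc ∑ p : m × n, P p.1 p.2 * Q p.1 p.2
      ≤ |∑ p : m × n, P p.1 p.2 * Q p.1 p.2| := le_abs_self _
    _ = Real.sqrt ((∑ p : m × n, P p.1 p.2 * Q p.1 p.2) ^ 2) := (Real.sqrt_sq_eq_abs _).symm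
    _ ≤ Real.sqrt ((∑ p : m × n, (P p.1 p.2) ^ 2) * ∑ p : m × n, (Q p.1 p.2) ^ 2) :=
        Real.sqrt_le_sqrt cs
    _ = frobNorm P * frobNorm Q := by
        rw [Real.sqrt_mul (Finset.sum_nonneg fun _ _ => sq_nonneg _),
          ← trace_transpose_mul_self_eq, ← trace_transpose_mul_self_eq]
        rfl

lemma trace_fromBlocks' {m n : Type*} [Fintype m] [Fintype n]
    (P : Matrix m m ℝ) (Q : Matrix m n ℝ) (R : Matrix n m ℝ) (S : Matrix n n ℝ) :
    Matrix.trace (fromBlocks P Q R S) = Matrix.trace P + Matrix.trace S := by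
  simp [Matrix.trace, Fintype.sum_sum_type, fromBlocks]

lemma trace_rearrange {N m k : Type*} [Fintype N] [Fintype m] [Fintype k]
    (R₁ : Matrix N m ℝ) (R₂ : Matrix N k ℝ) :
    Matrix.trace ((R₁ᵀ * R₂)ᵀ * (R₁ᵀ * R₂)) =
      Matrix.trace ((R₁ * R₁ᵀ)ᵀ * (R₂ * R₂ᵀ)) := by
  simp only [transpose_mul, transpose_transpose, Matrix.mul_assoc]
  rw [Matrix.trace_mul_comm]
  simp only [Matrix.mul_assoc]

lemma frobNorm_mul_transpose {m n : Type*} [Fintype m] [Fintype n] (C : Matrix m n ℝ) :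
    frobNorm (C * Cᵀ) = frobNorm (Cᵀ * C) := by
  unfold frobNorm
  congr 1
  simp only [transpose_mul, transpose_transpose, Matrix.mul_assoc]
  rw [Matrix.trace_mul_comm]
  simp only [Matrix.mul_assoc]

open scoped Matrix.Norms.L2Operator

lemma l2_norm_mul_transpose {m n : Type*} [Fintype m] [Fintype n]
    [DecidableEq m] [DecidableEq n] (C : Matrix m n ℝ) :
    ‖C * Cᵀ‖ = ‖Cᵀ * C‖ := by
  have h1 : ‖Cᵀ * C‖ = ‖C‖ * ‖C‖ := by
    rw [← conjTranspose_eq_transpose_of_trivial]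
    exact Matrix.l2_opNorm_conjTranspose_mul_self C
  have h2 : ‖C * Cᵀ‖ = ‖Cᵀ‖ * ‖Cᵀ‖ := by
    conv_lhs => rw [← transpose_transpose C, ← conjTranspose_eq_transpose_of_trivial Cᵀ]
    exact Matrix.l2_opNorm_conjTranspose_mul_self Cᵀ
  rw [h1, h2, ← conjTranspose_eq_transpose_of_trivial, Matrix.l2_opNorm_conjTranspose]

/-- If `M = [[A, X], [Xᵀ, B]]` is positive semidefinite, then `‖M‖ ≤ ‖A‖ + ‖B‖`
and `‖M‖_F ≤ ‖A‖_F + ‖B‖_F`. -/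
theorem block_psd_norm_bounds (n k : ℕ)
    (A : Matrix (Fin n) (Fin n) ℝ) (B : Matrix (Fin k) (Fin k) ℝ)
    (X : Matrix (Fin n) (Fin k) ℝ)
    (hM : (Matrix.fromBlocks A X Xᵀ B).PosSemidef) :
    specNorm (Matrix.fromBlocks A X Xᵀ B) ≤ specNorm A + specNorm B ∧
      frobNorm (Matrix.fromBlocks A X Xᵀ B) ≤ frobNorm A + frobNorm B := by
  obtain ⟨R, hR⟩ : ∃ R : Matrix (Fin n ⊕ Fin k) (Fin n ⊕ Fin k) ℝ,
      Matrix.fromBlocks A X Xᵀ B = Rᴴ * R := by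
    open scoped MatrixOrder in
    exact CStarAlgebra.nonneg_iff_eq_star_mul_self.mp hM.nonneg
  rw [conjTranspose_eq_transpose_of_trivial] at hR
  set R₁ := R.submatrix id Sum.inl with hR₁def
  set R₂ := R.submatrix id Sum.inr with hR₂def
  have hA : A = R₁ᵀ * R₁ := by
    ext i j
    have := congrFun (congrFun hR (Sum.inl i)) (Sum.inl j)
    simpa [Matrix.mul_apply, Matrix.fromBlocks, hR₁def] using this
  have hB : B = R₂ᵀ * R₂ := by
    ext i j
    have := congrFun (congrFun hR (Sum.inr i)) (Sum.inr j)
    simpa [Matrix.mul_apply, Matrix.fromBlocks, hR₂def] using this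
  have hX : X = R₁ᵀ * R₂ := by
    ext i j
    have := congrFun (congrFun hR (Sum.inl i)) (Sum.inr j)
    simpa [Matrix.mul_apply, Matrix.fromBlocks, hR₁def, hR₂def] using this
  have hRRt : R * Rᵀ = R₁ * R₁ᵀ + R₂ * R₂ᵀ := by
    ext i j
    simp [Matrix.mul_apply, Fintype.sum_sum_type, hR₁def, hR₂def]
  constructor
  · -- spectral bound
    have e1 : specNorm (Matrix.fromBlocks A X Xᵀ B) = ‖R * Rᵀ‖ := by
      rw [specNorm, ← Matrix.cstar_norm_def, hR, l2_norm_mul_transpose]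
    have e2 : specNorm A = ‖R₁ * R₁ᵀ‖ := by
      rw [specNorm, ← Matrix.cstar_norm_def, hA, ← l2_norm_mul_transpose]
    have e3 : specNorm B = ‖R₂ * R₂ᵀ‖ := by
      rw [specNorm, ← Matrix.cstar_norm_def, hB, ← l2_norm_mul_transpose]
    rw [e1, e2, e3, hRRt]
    exact norm_add_le _ _
  · -- Frobenius bound
    have hMt : (Matrix.fromBlocks A X Xᵀ B)ᵀ = Matrix.fromBlocks Aᵀ X Xᵀ Bᵀ := by
      rw [fromBlocks_transpose, transpose_transpose]
    have htr : Matrix.trace ((Matrix.fromBlocks A X Xᵀ B)ᵀ * Matrix.fromBlocks A X Xᵀ B)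
        = Matrix.trace (Aᵀ * A) + Matrix.trace (Xᵀ * X) +
          (Matrix.trace (Xᵀ * X) + Matrix.trace (Bᵀ * B)) := by
      rw [hMt, fromBlocks_multiply, trace_fromBlocks', Matrix.trace_add, Matrix.trace_add,
        Matrix.trace_mul_comm X Xᵀ]
    set a := frobNorm A with ha
    set b := frobNorm B with hb
    have ht0 : 0 ≤ Matrix.trace (Xᵀ * X) := trace_transpose_mul_self_nonneg X
    have htab : Matrix.trace (Xᵀ * X) ≤ a * b := by
      have h1 : Matrix.trace (Xᵀ * X) = Matrix.trace ((R₁ * R₁ᵀ)ᵀ * (R₂ * R₂ᵀ)) := by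
        rw [hX]; exact trace_rearrange R₁ R₂
      have h2 : frobNorm (R₁ * R₁ᵀ) = a := by rw [ha, hA, frobNorm_mul_transpose]
      have h3 : frobNorm (R₂ * R₂ᵀ) = b := by rw [hb, hB, frobNorm_mul_transpose]
      rw [h1, ← h2, ← h3]
      exact frob_inner_le _ _
    have ha0 : 0 ≤ a := frobNorm_nonneg A
    have hb0 : 0 ≤ b := frobNorm_nonneg B
    have : frobNorm (Matrix.fromBlocks A X Xᵀ B)
        = Real.sqrt (Matrix.trace (Aᵀ * A) + Matrix.trace (Xᵀ * X) +
          (Matrix.trace (Xᵀ * X) + Matrix.trace (Bᵀ * B))) := by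
      rw [frobNorm, htr]
    rw [this, ← frobNorm_sq A, ← frobNorm_sq B, ← ha, ← hb]
    calc Real.sqrt (a ^ 2 + Matrix.trace (Xᵀ * X) + (Matrix.trace (Xᵀ * X) + b ^ 2))
        ≤ Real.sqrt ((a + b) ^ 2) := Real.sqrt_le_sqrt (by nlinarith)
      _ = a + b := Real.sqrt_sq (by linarith)
end

section
/- For x > 0 and a ∈ (0,1), Γ(x + a) ≤ x^a Γ(x). -/
/-- Gautschi-type inequality: for `x > 0` and `a ∈ (0,1)`, `Γ(x + a) ≤ x^a Γ(x)`. -/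
theorem Gamma_add_le_rpow_mul_Gamma (x a : ℝ) (hx : 0 < x) (ha0 : 0 < a)
    (ha1 : a < 1) :
    Real.Gamma (x + a) ≤ x ^ a * Real.Gamma x := by
  have h := Real.Gamma_mul_add_mul_le_rpow_Gamma_mul_rpow_Gamma hx
    (by linarith : (0:ℝ) < x + 1) (by linarith : 0 < 1 - a) ha0 (by ring)
  have h1 : (1 - a) * x + a * (x + 1) = x + a := by ring
  rw [h1, Real.Gamma_add_one hx.ne'] at h
  have hΓ : 0 < Real.Gamma x := Real.Gamma_pos_of_pos hx
  calc Real.Gamma (x + a) ≤ Real.Gamma x ^ (1 - a) * (x * Real.Gamma x) ^ a := h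
    _ = x ^ a * Real.Gamma x := by
        rw [Real.mul_rpow hx.le hΓ.le, ← mul_assoc, mul_comm (Real.Gamma x ^ (1-a)),
          mul_assoc, ← Real.rpow_add hΓ]
        simp
end

section
/- For 0 < d < 1/2, the function g(d) = Γ(1 − 2d)/Γ(1 − d)² is monotonically increasing on (0, 1/2). -/
open Real Set in
/-- The function `g(d) = Γ(1 − 2d)/Γ(1 − d)²` is monotonically increasing on `(0, 1/2)`. -/
theorem Gamma_ratio_monotoneOn :
    MonotoneOn (fun d : ℝ => Real.Gamma (1 - 2 * d) / (Real.Gamma (1 - d)) ^ 2)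
      (Set.Ioo (0:ℝ) (1/2)) := by
  intro d₁ h1 d₂ h2 hle
  rcases eq_or_lt_of_le hle with rfl | hlt
  · exact le_refl _
  obtain ⟨h1a, h1b⟩ := h1
  obtain ⟨h2a, h2b⟩ := h2
  set a := 1 - 2 * d₂ with ha_def
  set b := 1 - 2 * d₁ with hb_def
  set u := 1 - d₂ with hu_def
  set v := 1 - d₁ with hv_def
  have hapos : (0:ℝ) < a := by simp [ha_def]; linarith
  have hbpos : (0:ℝ) < b := by simp [hb_def]; linarith
  have hupos : (0:ℝ) < u := by simp [hu_def]; linarith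
  have hvpos : (0:ℝ) < v := by simp [hv_def]; linarith
  have hau : a < u := by simp [ha_def, hu_def]; linarith
  have hbv : b < v := by simp [hb_def, hv_def]; linarith
  have hab : a < b := by simp [ha_def, hb_def]; linarith
  have huv : u < v := by simp [hu_def, hv_def]; linarith
  have hconv := Real.convexOn_log_Gamma
  have hma : a ∈ Ioi (0:ℝ) := hapos
  have hmb : b ∈ Ioi (0:ℝ) := hbpos
  have hmu : u ∈ Ioi (0:ℝ) := hupos
  have hmv : v ∈ Ioi (0:ℝ) := hvpos
  set f : ℝ → ℝ := Real.log ∘ Real.Gamma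
  -- slope(a,b) ≤ slope(a,v)
  have s1 : (f b - f a) / (b - a) ≤ (f v - f a) / (v - a) :=
    hconv.secant_mono hma hmb hmv (ne_of_gt hab) (ne_of_gt (hab.trans hbv)) hbv.le
  -- slope(v,a) ≤ slope(v,u), i.e. slope(a,v) ≤ slope(u,v)
  have s2 : (f a - f v) / (a - v) ≤ (f u - f v) / (u - v) :=
    hconv.secant_mono hmv hma hmu (ne_of_lt (hau.trans huv)) (ne_of_lt huv) hau.le
  have s2' : (f v - f a) / (v - a) ≤ (f v - f u) / (v - u) := by
    have e1 : (f a - f v) / (a - v) = (f v - f a) / (v - a) := by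
      rw [← neg_div_neg_eq]; ring_nf
    have e2 : (f u - f v) / (u - v) = (f v - f u) / (v - u) := by
      rw [← neg_div_neg_eq]; ring_nf
    rw [e1, e2] at s2; exact s2
  have hba : b - a = 2 * (d₂ - d₁) := by simp [ha_def, hb_def]; ring
  have hvu : v - u = d₂ - d₁ := by simp [hu_def, hv_def]
  have hdd : (0:ℝ) < d₂ - d₁ := by linarith
  have key : f b - f a ≤ 2 * (f v - f u) := by
    have := s1.trans s2'
    rw [hba, hvu] at this
    have h2d : (0:ℝ) < 2 * (d₂ - d₁) := by linarith
    rw [div_le_div_iff₀ h2d hdd] at this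
    nlinarith
  -- turn log inequality into the ratio inequality
  have hGa := Real.Gamma_pos_of_pos hapos
  have hGb := Real.Gamma_pos_of_pos hbpos
  have hGu := Real.Gamma_pos_of_pos hupos
  have hGv := Real.Gamma_pos_of_pos hvpos
  have hlog : Real.log (Real.Gamma b * Real.Gamma u ^ 2)
      ≤ Real.log (Real.Gamma a * Real.Gamma v ^ 2) := by
    rw [Real.log_mul (ne_of_gt hGb) (by positivity),
        Real.log_mul (ne_of_gt hGa) (by positivity),
        Real.log_pow, Real.log_pow]
    have : f b + 2 * f u ≤ f a + 2 * f v := by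
      simp only [f, Function.comp] at key ⊢; linarith
    simpa [f, Function.comp] using this
  have hmul : Real.Gamma b * Real.Gamma u ^ 2 ≤ Real.Gamma a * Real.Gamma v ^ 2 :=
    (Real.log_le_log_iff (by positivity) (by positivity)).mp hlog
  show Real.Gamma b / Real.Gamma v ^ 2 ≤ Real.Gamma a / Real.Gamma u ^ 2
  rw [div_le_div_iff₀ (by positivity) (by positivity)]
  nlinarith [hmul]
end

section
/- For 0 < d < 1/2, (1/2π) ∫_{−π}^{π} |e^{iω} − 1|^{−2d} dω = Γ(1 − 2d)/Γ(1 − d)². -/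
open Real MeasureTheory Set



lemma abs_exp_I_sub_one (ω : ℝ) :
    ‖Complex.exp (Complex.I * (ω:ℂ)) - 1‖ = 2 * |Real.sin (ω/2)| := by
  have h0 : Complex.exp (Complex.I * (ω:ℂ)) - 1
      = ((Real.cos ω - 1 : ℝ) : ℂ) + ((Real.sin ω : ℝ) : ℂ) * Complex.I := by
    rw [mul_comm, Complex.exp_mul_I]
    push_cast [← Complex.ofReal_cos, ← Complex.ofReal_sin]
    ring
  rw [h0, Complex.norm_add_mul_I]
  have h2 : (Real.cos ω - 1)^2 + (Real.sin ω)^2 = (2 * |Real.sin (ω/2)|)^2 := by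
    have hs := Real.sin_sq_eq_half_sub (ω/2)
    rw [show 2 * (ω/2) = ω by ring] at hs
    have hc := Real.sin_sq_add_cos_sq ω
    rw [mul_pow, sq_abs]
    nlinarith [hs, hc]
  rw [h2, Real.sqrt_sq (by positivity)]

lemma real_beta {s t : ℝ} (hs : 0 < s) (ht : 0 < t) :
    ∫ x in (0:ℝ)..1, x ^ (s-1) * (1-x) ^ (t-1)
      = Real.Gamma s * Real.Gamma t / Real.Gamma (s+t) := by
  have hst : 0 < s + t := by linarith
  have hG : Real.Gamma (s+t) ≠ 0 := (Real.Gamma_pos_of_pos hst).ne'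
  have key := Complex.Gamma_mul_Gamma_eq_betaIntegral (s := (s:ℂ)) (t := (t:ℂ))
    (by simpa using hs) (by simpa using ht)
  have hbeta : Complex.betaIntegral s t
      = ((∫ x in (0:ℝ)..1, x ^ (s-1) * (1-x) ^ (t-1) : ℝ) : ℂ) := by
    rw [Complex.betaIntegral, ← intervalIntegral.integral_ofReal]
    refine intervalIntegral.integral_congr fun x hx => ?_
    rw [Set.uIcc_of_le zero_le_one] at hx
    rw [Complex.ofReal_mul, Complex.ofReal_cpow hx.1,
      Complex.ofReal_cpow (by linarith [hx.2] : (0:ℝ) ≤ 1 - x)]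
    push_cast
    ring
  rw [hbeta, ← Complex.ofReal_add, Complex.Gamma_ofReal, Complex.Gamma_ofReal,
    Complex.Gamma_ofReal, ← Complex.ofReal_mul, ← Complex.ofReal_mul] at key
  have h := Complex.ofReal_inj.mp key
  field_simp
  linarith [h]


lemma cov_sin (d : ℝ) (hd0 : 0 < d) (hd : d < 1/2) :
    ∫ x in Set.Ioo (0:ℝ) 1, (4:ℝ)^(-d) * (x ^ ((1/2 - d) - 1) * (1-x) ^ ((1/2:ℝ) - 1))
      = ∫ ω in Set.Ioo (0:ℝ) π, (2*|Real.sin (ω/2)|) ^ (-(2*d)) := by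
  have hpi := Real.pi_pos
  -- derivative
  have hderiv : ∀ x ∈ Set.Ioo (0:ℝ) π, HasDerivWithinAt (fun ω => Real.sin (ω/2)^2)
      (Real.sin (x/2) * Real.cos (x/2)) (Set.Ioo (0:ℝ) π) x := by
    intro x _
    have h1 : HasDerivAt (fun ω : ℝ => ω/2) (1/2) x := (hasDerivAt_id x).div_const 2
    have h2 := (Real.hasDerivAt_sin (x/2)).comp x h1
    have h3 := h2.pow 2
    refine (h3.congr_deriv ?_).hasDerivWithinAt
    simp only [Function.comp_apply, pow_one]
    ring
  have hinj : Set.InjOn (fun ω => Real.sin (ω/2)^2) (Set.Ioo (0:ℝ) π) := by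
    have hmono : StrictMonoOn (fun ω => Real.sin (ω/2)^2) (Set.Ioo (0:ℝ) π) := by
      intro a ha b hb hab
      have h1 : Real.sin (a/2) < Real.sin (b/2) := by
        apply Real.strictMonoOn_sin ⟨by linarith [ha.1], by linarith [ha.2]⟩
          ⟨by linarith [hb.1], by linarith [hb.2]⟩ (by linarith)
      have hpos : 0 < Real.sin (a/2) :=
        Real.sin_pos_of_pos_of_lt_pi (by linarith [ha.1]) (by linarith [ha.2])
      simpa using pow_lt_pow_left₀ h1 hpos.le two_ne_zero
    exact hmono.injOn
  have himg : (fun ω => Real.sin (ω/2)^2) '' Set.Ioo (0:ℝ) π = Set.Ioo (0:ℝ) 1 := by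
    ext x
    constructor
    · rintro ⟨ω, hω, rfl⟩
      have h1 : 0 < Real.sin (ω/2) :=
        Real.sin_pos_of_pos_of_lt_pi (by linarith [hω.1]) (by linarith [hω.2])
      have h2 : Real.sin (ω/2) < 1 := by
        have := Real.strictMonoOn_sin ⟨by linarith [hω.1], by linarith [hω.2]⟩
          ⟨by linarith, by linarith⟩ (by linarith [hω.2] : ω/2 < π/2)
        simpa using this
      exact ⟨by positivity, by nlinarith⟩
    · rintro ⟨hx0, hx1⟩
      have hs0 : 0 < Real.sqrt x := Real.sqrt_pos.mpr hx0
      have hs1 : Real.sqrt x < 1 := by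
        rw [show (1:ℝ) = Real.sqrt 1 by simp]
        exact Real.sqrt_lt_sqrt hx0.le hx1
      refine ⟨2 * Real.arcsin (Real.sqrt x), ⟨?_, ?_⟩, ?_⟩
      · have := Real.arcsin_pos.mpr hs0
        linarith
      · have : Real.arcsin (Real.sqrt x) < π/2 := Real.arcsin_lt_pi_div_two.mpr hs1
        linarith
      · simp only [show 2 * Real.arcsin (Real.sqrt x) / 2 = Real.arcsin (Real.sqrt x) by ring]
        rw [Real.sin_arcsin (by linarith) (by linarith), Real.sq_sqrt hx0.le]
  have key := MeasureTheory.integral_image_eq_integral_abs_deriv_smul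
    measurableSet_Ioo hderiv hinj
    (fun x => (4:ℝ)^(-d) * (x ^ ((1/2 - d) - 1) * (1-x) ^ ((1/2:ℝ) - 1)))
  rw [himg] at key
  rw [key]
  apply MeasureTheory.setIntegral_congr_fun measurableSet_Ioo
  intro ω hω
  have hS : 0 < Real.sin (ω/2) :=
    Real.sin_pos_of_pos_of_lt_pi (by linarith [hω.1]) (by linarith [hω.2])
  have hC : 0 < Real.cos (ω/2) :=
    Real.cos_pos_of_mem_Ioo ⟨by linarith [hω.1], by linarith [hω.2]⟩
  set S := Real.sin (ω/2) with hSdef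
  set C := Real.cos (ω/2) with hCdef
  have h1mS : 1 - S^2 = C^2 := by
    have := Real.sin_sq_add_cos_sq (ω/2)
    rw [← hSdef, ← hCdef] at this
    linarith
  simp only [smul_eq_mul, ← hSdef, h1mS]
  rw [abs_of_pos (mul_pos hS hC), abs_of_pos hS]
  have hSp : (S^2 : ℝ) ^ ((1/2 - d) - 1) = S ^ (2 * ((1/2 - d) - 1)) := by
    rw [← Real.rpow_natCast S 2, ← Real.rpow_mul hS.le]
    norm_num
  have hCp : (C^2 : ℝ) ^ ((1/2:ℝ) - 1) = C ^ (2 * ((1/2:ℝ) - 1)) := by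
    rw [← Real.rpow_natCast C 2, ← Real.rpow_mul hC.le]
    norm_num
  rw [hSp, hCp]
  have h4 : (4:ℝ)^(-d) = (2:ℝ)^(-(2*d)) := by
    rw [show (4:ℝ) = 2^(2:ℕ) by norm_num, ← Real.rpow_natCast 2 2,
      ← Real.rpow_mul (by norm_num : (0:ℝ) ≤ 2)]
    norm_num
  rw [h4, Real.mul_rpow (by norm_num : (0:ℝ) ≤ 2) hS.le]
  have e1 : S ^ (2 * ((1/2 - d) - 1)) = S ^ (-(2*d)) * S⁻¹ := by
    rw [show 2 * ((1/2 - d) - 1) = -(2*d) + (-1) by ring, Real.rpow_add hS,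
      Real.rpow_neg_one]
  have e2 : C ^ (2 * ((1/2:ℝ) - 1)) = C⁻¹ := by
    rw [show 2 * ((1/2:ℝ) - 1) = (-1 : ℝ) by ring, Real.rpow_neg_one]
  rw [e1, e2]
  field_simp


/-- For `0 < d < 1/2`, `(1/2π) ∫_{−π}^{π} |e^{iω} − 1|^{−2d} dω = Γ(1 − 2d)/Γ(1 − d)²`. -/
theorem integral_abs_exp_sub_one_rpow (d : ℝ) (hd0 : 0 < d) (hd : d < 1/2) :
    (1 / (2 * Real.pi)) *
        ∫ ω in (-Real.pi)..Real.pi,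
          (‖Complex.exp (Complex.I * (ω:ℂ)) - 1‖) ^ (-(2 * d)) =
      Real.Gamma (1 - 2 * d) / (Real.Gamma (1 - d)) ^ 2 := by
  have hpi := Real.pi_pos
  set G : ℝ → ℝ := fun ω => (2*|Real.sin (ω/2)|) ^ (-(2*d)) with hGdef
  -- rewrite integrand
  have hcong : ∫ ω in (-Real.pi)..Real.pi,
      (‖Complex.exp (Complex.I * (ω:ℂ)) - 1‖) ^ (-(2 * d))
      = ∫ ω in (-Real.pi)..Real.pi, G ω :=
    intervalIntegral.integral_congr (fun ω _ => by rw [abs_exp_I_sub_one])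
  rw [hcong]
  -- integrability on [0, π]
  have hbase : Continuous (fun ω : ℝ => 2*|Real.sin (ω/2)|) :=
    continuous_const.mul ((Real.continuous_sin.comp (continuous_id.div_const 2)).abs)
  have hGint : IntervalIntegrable G volume 0 π := by
    apply IntervalIntegrable.mono_fun
      (f := fun ω : ℝ => (2/π)^(-(2*d)) * ω ^ (-(2*d)))
      ((intervalIntegral.intervalIntegrable_rpow' (by linarith : (-1:ℝ) < -(2*d))).const_mul _)
    · refine (ContinuousOn.rpow_const (hbase.continuousOn) (fun x hx => Or.inl ?_)).aestronglyMeasurable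
        measurableSet_uIoc
      rw [Set.uIoc_of_le hpi.le] at hx
      have := Real.sin_pos_of_pos_of_lt_pi (by linarith [hx.1] : 0 < x/2)
        (by linarith [hx.2] : x/2 < π)
      positivity
    · rw [Set.uIoc_of_le hpi.le]
      filter_upwards [ae_restrict_mem measurableSet_Ioc] with ω hω
      have hω0 : 0 < ω := hω.1
      have h1 : ω/π ≤ Real.sin (ω/2) := by
        have := Real.mul_le_sin (x := ω/2) (by linarith) (by linarith [hω.2])
        calc ω/π = 2/π * (ω/2) := by ring
          _ ≤ Real.sin (ω/2) := this
      have h2 : 2/π * ω ≤ 2*|Real.sin (ω/2)| := by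
        have := le_abs_self (Real.sin (ω/2))
        have hp : 2/π * ω = 2 * (ω/π) := by ring
        rw [hp]; linarith
      have h3 : G ω ≤ (2/π * ω) ^ (-(2*d)) :=
        Real.rpow_le_rpow_of_nonpos (by positivity) h2 (by linarith)
      have h4 : (2/π * ω) ^ (-(2*d)) = (2/π)^(-(2*d)) * ω ^ (-(2*d)) :=
        Real.mul_rpow (by positivity) hω0.le
      have hGnn : 0 ≤ G ω := Real.rpow_nonneg (by positivity) _
      have hRnn : 0 ≤ (2/π)^(-(2*d)) * ω ^ (-(2*d)) :=
        mul_nonneg (Real.rpow_nonneg (by positivity) _) (Real.rpow_nonneg hω0.le _)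
      rw [Real.norm_eq_abs, Real.norm_eq_abs, abs_of_nonneg hGnn, abs_of_nonneg hRnn]
      rw [h4] at h3
      exact h3
  -- evenness
  have heven : ∀ ω : ℝ, G (-ω) = G ω := fun ω => by
    simp [hGdef, neg_div]
  have hGint' : IntervalIntegrable G volume (-π) 0 := by
    have h := (IntervalIntegrable.iff_comp_neg (f := G) (by simp)).mp hGint
    simp only [heven, neg_zero] at h
    exact h.symm
  -- split
  have hsplit : ∫ ω in (-Real.pi)..Real.pi, G ω = 2 * ∫ ω in (0:ℝ)..π, G ω := by
    rw [← intervalIntegral.integral_add_adjacent_intervals hGint' hGint]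
    have h := intervalIntegral.integral_comp_neg (a := (0:ℝ)) (b := π) (f := G)
    simp only [heven, neg_zero] at h
    rw [← h]
    ring
  rw [hsplit]
  -- change of variables
  have hhalf : ∫ ω in (0:ℝ)..π, G ω
      = (4:ℝ)^(-d) * ∫ x in (0:ℝ)..1, x ^ ((1/2 - d) - 1) * (1-x) ^ ((1/2:ℝ) - 1) := by
    rw [intervalIntegral.integral_of_le hpi.le, integral_Ioc_eq_integral_Ioo,
      ← cov_sin d hd0 hd, intervalIntegral.integral_of_le zero_le_one,
      integral_Ioc_eq_integral_Ioo, ← MeasureTheory.integral_const_mul]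
  rw [hhalf, real_beta (by linarith : (0:ℝ) < 1/2 - d) (by norm_num : (0:ℝ) < 1/2)]
  -- Gamma algebra
  have hGhalf : Real.Gamma (1/2) = Real.sqrt π := Real.Gamma_one_half_eq
  have hdup := Real.Gamma_mul_Gamma_add_half (1/2 - d)
  rw [show (1/2 - d) + 1/2 = 1 - d by ring, show 2 * (1/2 - d) = 1 - 2*d by ring,
    show 1 - (1 - 2*d) = 2*d by ring] at hdup
  have hsum : (1/2 - d) + 1/2 = 1 - d := by ring
  rw [hsum, hGhalf]
  have hGd : 0 < Real.Gamma (1 - d) := Real.Gamma_pos_of_pos (by linarith)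
  have hC : 0 < Real.Gamma (1 - 2*d) := Real.Gamma_pos_of_pos (by linarith)
  have h4d : (4:ℝ)^(-d) * (2:ℝ)^(2*d) = 1 := by
    rw [show (4:ℝ) = 2^(2:ℕ) by norm_num, ← Real.rpow_natCast 2 2,
      ← Real.rpow_mul (by norm_num : (0:ℝ) ≤ 2), ← Real.rpow_add (by norm_num : (0:ℝ) < 2)]
    norm_num
  have hss : Real.sqrt π * Real.sqrt π = π := Real.mul_self_sqrt hpi.le
  have key : (4:ℝ)^(-d) * (Real.Gamma (1/2 - d) * Real.sqrt π) * Real.Gamma (1 - d)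
      = Real.Gamma (1 - 2*d) * π := by
    calc (4:ℝ)^(-d) * (Real.Gamma (1/2 - d) * Real.sqrt π) * Real.Gamma (1 - d)
        = (Real.Gamma (1/2 - d) * Real.Gamma (1 - d)) * ((4:ℝ)^(-d) * Real.sqrt π) := by ring
      _ = (Real.Gamma (1 - 2*d) * 2^(2*d) * Real.sqrt π) * ((4:ℝ)^(-d) * Real.sqrt π) := by
          rw [hdup]
      _ = Real.Gamma (1 - 2*d) * (((4:ℝ)^(-d) * 2^(2*d)) * (Real.sqrt π * Real.sqrt π)) := by
          ring
      _ = Real.Gamma (1 - 2*d) * π := by rw [h4d, hss]; ring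
  field_simp
  rw [show ((1 - 2*d)/2 : ℝ) = 1/2 - d by ring]
  linear_combination key
end
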